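/- arXiv:1003.1215 — 2 statements merged into one kernel-verified Lean document; each statement's English description precedes it below -/
import Mathlib

section
/- Let p > 1 be real and λ ∈ ℂ with λ ≠ 0. The order of vanishing of s ↦ det(Id − λ p^{−s}) = 1 − λ p^{−s} at s = 0 equals 1 if λ = 1 and equals 0 otherwise. Consequently, for a finite-dimensional complex vector space V with an automorphism φ, the order of vanishing at s = 0 of s ↦ det(Id − φ p^{−s} | V) equals the algebraic multiplicity of the eigenvalue 1 of φ, i.e., dim ker((Id − φ)^w) for w ≥ dim V. -/
/-!
The map `s ↦ b ^ (-s)` is analytic at `0` with value `1` and derivative `-log b ≠ 0`, so it is a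
local coordinate there: the order at `s = 0` of `F (b ^ (-s))` is the order of `F` at `1`.
For `F t = det (1 - t • φ)`, the substitution `t = u⁻¹` gives `u⁻ⁿ · χ_φ(u)`, whose order at `1`
is the multiplicity of `1` as a root of the characteristic polynomial `χ_φ`, i.e. the dimension
of the generalized `1`-eigenspace of `φ`.
-/

open Polynomial

lemma Polynomial.analyticOrderAt_eval {𝕜 : Type*} [NontriviallyNormedField 𝕜] {P : 𝕜[X]}
    (hP : P ≠ 0) (a : 𝕜) :
    analyticOrderAt (fun x => P.eval x) a = P.rootMultiplicity a := by
  rw [(AnalyticOnNhd.eval_polynomial P a trivial).analyticOrderAt_eq_natCast]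
  refine ⟨fun x => (P /ₘ (X - C a) ^ P.rootMultiplicity a).eval x,
    AnalyticOnNhd.eval_polynomial _ a trivial,
    eval_divByMonic_pow_rootMultiplicity_ne_zero a hP, .of_forall fun x => ?_⟩
  conv_lhs => rw [← pow_mul_divByMonic_rootMultiplicity_eq P a]
  simp

lemma analyticOrderAt_comp_cpow_neg {b : ℂ} (hb : Complex.log b ≠ 0) (f : ℂ → ℂ) :
    analyticOrderAt (fun s : ℂ => f (b ^ (-s))) 0 = analyticOrderAt f 1 := by
  have hb0 : b ≠ 0 := by rintro rfl; simp at hb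
  have hexp : (fun s : ℂ => b ^ (-s)) = fun s => Complex.exp (Complex.log b * -s) := by
    funext s; rw [Complex.cpow_def_of_ne_zero hb0]
  have hanalytic : AnalyticAt ℂ (fun s : ℂ => b ^ (-s)) 0 := by
    rw [hexp]; fun_prop
  have hderiv : deriv (fun s : ℂ => b ^ (-s)) 0 ≠ 0 := by
    rw [((hasDerivAt_neg (0 : ℂ)).const_cpow (Or.inl hb0)).deriv]
    simpa using hb
  simpa [Function.comp_def] using analyticOrderAt_comp_of_deriv_ne_zero (f := f) hanalytic hderiv

lemma analyticOrderAt_det_id_sub_smul {𝕜 V : Type*} [NontriviallyNormedField 𝕜] [CompleteSpace 𝕜]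
    [CharZero 𝕜] [AddCommGroup V] [Module 𝕜 V] [FiniteDimensional 𝕜 V] (φ : Module.End 𝕜 V) :
    analyticOrderAt (fun t : 𝕜 => LinearMap.det (LinearMap.id - t • φ)) 1 =
      φ.charpoly.rootMultiplicity 1 := by
  set F := fun t : 𝕜 => LinearMap.det (LinearMap.id - t • φ)
  have hinv : deriv (fun u : 𝕜 => u⁻¹) 1 ≠ 0 := by simp
  have hcomp := analyticOrderAt_comp_of_deriv_ne_zero (f := F) (analyticAt_inv one_ne_zero) hinv
  have heq : F ∘ (·⁻¹) =ᶠ[nhds 1]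
      (fun u => u⁻¹ ^ Module.finrank 𝕜 V) * fun u => φ.charpoly.eval u := by
    filter_upwards [eventually_ne_nhds one_ne_zero] with u hu
    have : LinearMap.id - u⁻¹ • φ = u⁻¹ • (algebraMap 𝕜 (Module.End 𝕜 V) u - φ) := by
      rw [Algebra.algebraMap_eq_smul_one, smul_sub, smul_smul, inv_mul_cancel₀ hu, one_smul,
        Module.End.one_eq_id]
    simp only [F, Function.comp_apply, Pi.mul_apply, this, LinearMap.det_smul,
      LinearMap.eval_charpoly]
  have hinv_pow : AnalyticAt 𝕜 (fun u : 𝕜 => u⁻¹ ^ Module.finrank 𝕜 V) 1 :=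
    (analyticAt_inv one_ne_zero).pow _
  calc analyticOrderAt F 1 = analyticOrderAt (F ∘ (·⁻¹)) 1 := by rw [hcomp, inv_one]
    _ = analyticOrderAt (fun u : 𝕜 => u⁻¹ ^ Module.finrank 𝕜 V) 1 +
          analyticOrderAt (fun u => φ.charpoly.eval u) 1 := by
      rw [analyticOrderAt_congr heq,
        analyticOrderAt_mul hinv_pow (AnalyticOnNhd.eval_polynomial _ 1 trivial)]
    _ = φ.charpoly.rootMultiplicity 1 := by
      rw [analyticOrderAt_eq_zero.2 (.inr (by simp)), zero_add,
        analyticOrderAt_eval φ.charpoly_monic.ne_zero]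

lemma finrank_ker_one_sub_pow_eq_rootMultiplicity_one {K V : Type*} [Field K] [AddCommGroup V] [Module K V]
    [FiniteDimensional K V] (φ : Module.End K V) {w : ℕ} (hw : Module.finrank K V ≤ w) :
    Module.finrank K (LinearMap.ker ((1 - φ) ^ w)) = φ.charpoly.rootMultiplicity 1 := by
  have hker : LinearMap.ker ((1 - φ) ^ w) = φ.maxGenEigenspace 1 := by
    rw [Module.End.maxGenEigenspace_eq_genEigenspace_finrank, Module.End.genEigenspace_nat,
      one_smul, ← Module.End.ker_pow_eq_ker_pow_finrank_of_le hw,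
      show 1 - φ = (-1 : K) • (φ - 1) by simp, _root_.smul_pow,
      LinearMap.ker_smul _ _ (pow_ne_zero _ (neg_ne_zero.2 one_ne_zero))]
  rw [hker, LinearMap.finrank_maxGenEigenspace_eq]

theorem stmt_3_general (p : ℝ) (hp : 1 < p) (lam : ℂ)
    (V : Type*) [AddCommGroup V] [Module ℂ V] [FiniteDimensional ℂ V]
    (φ : V ≃ₗ[ℂ] V) :
    analyticOrderAt (fun s : ℂ => 1 - lam * (p : ℂ) ^ (-s)) 0 = (if lam = 1 then 1 else 0) ∧
    ∀ w : ℕ, Module.finrank ℂ V ≤ w →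
      analyticOrderAt (fun s : ℂ =>
        LinearMap.det ((LinearMap.id : V →ₗ[ℂ] V) - (p : ℂ) ^ (-s) • φ.toLinearMap)) 0 = (Module.finrank ℂ
        (LinearMap.ker (((1 : V →ₗ[ℂ] V) - φ.toLinearMap) ^ w)) : ℕ∞) := by
  have hlog : Complex.log p ≠ 0 := by
    rw [← Complex.ofReal_log (by linarith)]
    exact Complex.ofReal_ne_zero.2 (Real.log_pos hp).ne'
  refine ⟨?_, fun w hw => ?_⟩
  · rw [analyticOrderAt_comp_cpow_neg hlog (fun t => 1 - lam * t)]
    split_ifs with hlam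
    · rw [hlam, show (fun t : ℂ => 1 - 1 * t) = -(· - 1) by ext; simp, analyticOrderAt_neg,
        analyticOrderAt_id_sub_const_self]
    · exact analyticOrderAt_eq_zero.2 (.inr (by simpa [sub_eq_zero] using Ne.symm hlam))
  · rw [analyticOrderAt_comp_cpow_neg hlog (fun t => LinearMap.det (LinearMap.id - t • _)),
      analyticOrderAt_det_id_sub_smul, finrank_ker_one_sub_pow_eq_rootMultiplicity_one _ hw]

/-- For `λ ≠ 0`, the order of vanishing of `s ↦ 1 − λ p^{−s}` at `s = 0` is `1` if `λ = 1`
and `0` otherwise; consequently the order of vanishing at `s = 0` of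
`s ↦ det(Id − φ p^{−s} | V)` equals the algebraic multiplicity `dim ker((Id − φ)^w)`
(for any `w ≥ dim V`) of the eigenvalue `1` of the automorphism `φ`. -/
theorem stmt_3 (p : ℝ) (hp : 1 < p) (lam : ℂ) (hlam : lam ≠ 0)
    (h1 : AnalyticAt ℂ (fun s : ℂ => 1 - lam * (p : ℂ) ^ (-s)) 0)
    (V : Type*) [AddCommGroup V] [Module ℂ V] [FiniteDimensional ℂ V]
    (φ : V ≃ₗ[ℂ] V)
    (h2 : AnalyticAt ℂ (fun s : ℂ =>
      LinearMap.det ((LinearMap.id : V →ₗ[ℂ] V) - (p : ℂ) ^ (-s) • φ.toLinearMap)) 0) :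
    analyticOrderAt (fun s : ℂ => 1 - lam * (p : ℂ) ^ (-s)) 0 = (if lam = 1 then 1 else 0) ∧
    ∀ w : ℕ, Module.finrank ℂ V ≤ w →
      analyticOrderAt (fun s : ℂ =>
        LinearMap.det ((LinearMap.id : V →ₗ[ℂ] V) - (p : ℂ) ^ (-s) • φ.toLinearMap)) 0 = (Module.finrank ℂ
        (LinearMap.ker (((1 : V →ₗ[ℂ] V) - φ.toLinearMap) ^ w)) : ℕ∞) :=
  stmt_3_general p hp lam V φ
end

section
/- Let W = V^{⊕f} where V is a finite-dimensional ℂ-vector space with automorphism φ, and let ψ : W → W be given by ψ(v_1, ..., v_f) = (φ(v_f), v_1, ..., v_{f−1}). Then for every t ∈ ℂ: det(Id_W − t·ψ) = det(Id_V − t^f · φ). -/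
/-!
Let `S` be the shift `(v₁, …, v_f) ↦ (0, v₁, …, v_{f−1})` without wrap-around, `H` the projection
onto the last coordinate and `G u = (t φ u, t² φ u, …, t^f φ u)`. Then
`1 − tψ = (1 − tS)(1 − G H)`. Since `S` is nilpotent, `det(1 − tS) = 1`, and Sylvester's identity
gives `det(1 − G H) = det(1 − H G) = det(1 − t^f φ)`.
-/

/-- The cyclic "induced" endomorphism `ψ` of `W = V^{⊕f}`:
`ψ(v₁, ..., v_f) = (φ(v_f), v₁, ..., v_{f−1})`. -/
noncomputable def cyclicShift (f : ℕ) (hf : 0 < f) {V : Type*} [AddCommGroup V]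
    [Module ℂ V] (φ : V →ₗ[ℂ] V) : (Fin f → V) →ₗ[ℂ] (Fin f → V) :=
  LinearMap.pi fun i =>
    if i.val = 0 then φ ∘ₗ LinearMap.proj (⟨f - 1, by omega⟩ : Fin f)
    else LinearMap.proj (⟨i.val - 1, by omega⟩ : Fin f)

namespace LinearMap

variable {R M N : Type*} [CommRing R] [AddCommGroup M] [Module R M] [AddCommGroup N] [Module R N]

theorem det_one_sub_of_isNilpotent [IsDomain R] [Module.Free R M] [Module.Finite R M]
    {u : M →ₗ[R] M} (hu : IsNilpotent u) : (1 - u).det = 1 := by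
  simpa [hu.charpoly_eq_X_pow_finrank] using (eval_charpoly u 1).symm

theorem det_one_sub_comp_comm [Module.Free R M] [Module.Finite R M] [Module.Free R N]
    [Module.Finite R N] (g : N →ₗ[R] M) (h : M →ₗ[R] N) :
    (1 - g ∘ₗ h).det = (1 - h ∘ₗ g).det := by
  classical
  let bM := Module.Free.chooseBasis R M
  let bN := Module.Free.chooseBasis R N
  rw [← det_toMatrix bM, ← det_toMatrix bN, map_sub, map_sub, toMatrix_one, toMatrix_one,
    toMatrix_comp bM bN bM, toMatrix_comp bN bM bN, Matrix.det_one_sub_mul_comm]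

end LinearMap

section BlockCyclic

variable {R V : Type*} [CommRing R] [AddCommGroup V] [Module R V]

noncomputable def truncShift (f : ℕ) : (Fin f → V) →ₗ[R] (Fin f → V) :=
  LinearMap.pi fun i =>
    if i.val = 0 then 0 else LinearMap.proj (⟨i.val - 1, by omega⟩ : Fin f)

theorem truncShift_pow_apply_of_lt {f k : ℕ} (v : Fin f → V) {i : Fin f} (hi : i.val < k) :
    ((truncShift f : (Fin f → V) →ₗ[R] (Fin f → V)) ^ k) v i = 0 := by
  induction k generalizing i with
  | zero => omega
  | succ k ih =>
    rw [pow_succ', Module.End.mul_apply]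
    by_cases hi0 : i.val = 0
    · simp [truncShift, hi0]
    · simpa [truncShift, hi0] using ih (i := ⟨i.val - 1, by omega⟩) (by simp; omega)

theorem isNilpotent_truncShift (f : ℕ) :
    IsNilpotent (truncShift f : (Fin f → V) →ₗ[R] (Fin f → V)) :=
  ⟨f, LinearMap.ext fun v => funext fun i => truncShift_pow_apply_of_lt v i.isLt⟩

noncomputable def powerSmulColumn (f : ℕ) (t : R) (φ : V →ₗ[R] V) : V →ₗ[R] (Fin f → V) :=
  LinearMap.pi fun i => t ^ (i.val + 1) • φ

theorem proj_last_comp_powerSmulColumn {f : ℕ} (hf : 0 < f) (t : R) (φ : V →ₗ[R] V) :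
    LinearMap.proj (⟨f - 1, by omega⟩ : Fin f) ∘ₗ powerSmulColumn f t φ = t ^ f • φ := by
  ext u
  simp [powerSmulColumn, Nat.sub_add_cancel hf]

end BlockCyclic

theorem one_sub_smul_cyclicShift_eq_comp {f : ℕ} (hf : 0 < f) {V : Type*} [AddCommGroup V]
    [Module ℂ V] (φ : V →ₗ[ℂ] V) (t : ℂ) :
    1 - t • cyclicShift f hf φ = (1 - t • truncShift f) ∘ₗ
      (1 - powerSmulColumn f t φ ∘ₗ LinearMap.proj (⟨f - 1, by omega⟩ : Fin f)) := by
  refine LinearMap.ext fun v => funext fun i => ?_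
  by_cases hi : i.val = 0
  · simp [cyclicShift, truncShift, powerSmulColumn, hi]
  · simp only [cyclicShift, truncShift, powerSmulColumn, hi, if_false, LinearMap.sub_apply,
      LinearMap.smul_apply, LinearMap.comp_apply, LinearMap.pi_apply, LinearMap.proj_apply,
      Module.End.one_apply, Pi.sub_apply, Pi.smul_apply, Nat.sub_add_cancel (Nat.pos_of_ne_zero hi),
      pow_succ' t i.val]
    module

theorem stmt_13_general (f : ℕ) (hf : 0 < f) (V : Type*) [AddCommGroup V] [Module ℂ V]
    [FiniteDimensional ℂ V] (φ : V →ₗ[ℂ] V) (t : ℂ) :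
    LinearMap.det ((1 : (Fin f → V) →ₗ[ℂ] (Fin f → V)) - t • cyclicShift f hf φ)
      = LinearMap.det ((1 : V →ₗ[ℂ] V) - t ^ f • φ) := by
  rw [one_sub_smul_cyclicShift_eq_comp hf, LinearMap.det_comp,
    LinearMap.det_one_sub_of_isNilpotent ((isNilpotent_truncShift f).smul t), one_mul,
    LinearMap.det_one_sub_comp_comm, proj_last_comp_powerSmulColumn hf]

/-- Block-cyclic determinant identity: for `W = V^{⊕f}` and
`ψ(v₁, ..., v_f) = (φ(v_f), v₁, ..., v_{f−1})`, one has
`det(Id_W − t·ψ) = det(Id_V − t^f·φ)` for every `t ∈ ℂ`. -/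
theorem stmt_13 (f : ℕ) (hf : 0 < f) (V : Type*) [AddCommGroup V] [Module ℂ V]
    [FiniteDimensional ℂ V] (φ : V →ₗ[ℂ] V) (hφ : Function.Bijective φ) (t : ℂ) :
    LinearMap.det ((1 : (Fin f → V) →ₗ[ℂ] (Fin f → V)) - t • cyclicShift f hf φ)
      = LinearMap.det ((1 : V →ₗ[ℂ] V) - t ^ f • φ) :=
  stmt_13_general f hf V φ t
end
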